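/- arXiv:0904.3743 — 4 statements merged into one kernel-verified Lean document; each statement's English description precedes it below -/
import Mathlib

section
/- Let M be a proper, nontrivial, graded submodule of A^λ. Then either M = A^{λ,k} for some k ∈ χ_λ, or M = A^{λ,k} ⊕ A^{λ,k'} for some k, k' ∈ χ_λ with k ≤ 0 < k'. -/
/-!
Write `A^λ = A x` and let `t_i` be the free generator of `A_i` over `R`. Every element of
`A^λ_i` is `r t_i x = t_i σ^i(r) x`, which vanishes if `σ^i(r) ∈ λ` and otherwise generates
`A^λ_i`, since `σ^i(r)` is then invertible modulo the maximal ideal `λ`. Hence a graded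
submodule `N` is the span of the components `A^λ_i` with `t_i x ∈ N`, and only the set `δ(N)`
of these degrees matters. Left multiplication by `t₊` pushes `δ(N)` up from degrees `≥ 0` and by
`t₋` down from degrees `≤ 0`; towards `0`, the relations `t₋ t_i = σ(v) t_{i-1}` (`i > 0`) and
`t₊ t_i = v t_{i+1}` (`i < 0`) let it move from `i` to `i ∓ 1` unless `i` resp. `i + 1` lies
in `χ_λ`. As `0 ∉ δ(N)` for proper `N`, `δ(N)` is a ray `(-∞, k)` with `k ≤ 0`, a ray
`[k', ∞)` with `k' > 0`, or their union, with the endpoints in `χ_λ`.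
-/

noncomputable section

/-- A realization of the generalized Weyl algebra `T(R,σ,v)`:
a `ℤ`-graded `ℂ`-algebra `A` containing `R` in degree `0`, with elements
`t₊` of degree `1` and `t₋` of degree `-1` satisfying the GWA relations, such that each
homogeneous component `A_n` is free of rank one as a left `R`-module with basis
`t₊^n` (for `n ≥ 0`) resp. `t₋^{-n}` (for `n ≤ 0`). -/
structure GWA (R : Type) [CommRing R] [Algebra ℂ R] (σ : R ≃ₐ[ℂ] R) (v : R) : Type 1 where
  A : Type
  [ringA : Ring A]
  [algA : Algebra ℂ A]
  emb : R →ₐ[ℂ] A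
  tp : A
  tm : A
  rel1 : ∀ r : R, emb r * tp = tp * emb (σ r)
  rel2 : ∀ r : R, emb (σ r) * tm = tm * emb r
  rel3 : tm * tp = emb (σ v)
  rel4 : tp * tm = emb v
  deg : ℤ → AddSubgroup A
  algmap_mem : ∀ c : ℂ, algebraMap ℂ A c ∈ deg 0
  emb_mem : ∀ r : R, emb r ∈ deg 0
  tp_mem : tp ∈ deg 1
  tm_mem : tm ∈ deg (-1)
  mul_mem : ∀ {i j : ℤ} {a b : A}, a ∈ deg i → b ∈ deg j → a * b ∈ deg (i + j)
  decomp : ∀ a : A, ∃ (s : Finset ℤ) (g : ℤ → A), (∀ i, g i ∈ deg i) ∧ a = ∑ i ∈ s, g i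
  indep : ∀ (s : Finset ℤ) (g : ℤ → A), (∀ i, g i ∈ deg i) → (∑ i ∈ s, g i) = 0 →
    ∀ i ∈ s, g i = 0
  free_pos : ∀ n : ℕ, ∀ a ∈ deg (n : ℤ), ∃! r : R, a = emb r * tp ^ n
  free_neg : ∀ n : ℕ, ∀ a ∈ deg (-(n : ℤ)), ∃! r : R, a = emb r * tm ^ n

attribute [instance] GWA.ringA GWA.algA

variable {R : Type} [CommRing R] [Algebra ℂ R] {σ : R ≃ₐ[ℂ] R} {v : R}

/-- A `ℤ`-graded left module over (a realization of) a generalized Weyl algebra. -/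
structure GradedMod (G : GWA R σ v) : Type 1 where
  M : Type
  [acg : AddCommGroup M]
  [mod : Module G.A M]
  deg : ℤ → AddSubgroup M
  smul_mem : ∀ {i j : ℤ} {a : G.A} {m : M}, a ∈ G.deg i → m ∈ deg j → a • m ∈ deg (i + j)
  decomp : ∀ m : M, ∃ (s : Finset ℤ) (g : ℤ → M), (∀ i, g i ∈ deg i) ∧ m = ∑ i ∈ s, g i
  indep : ∀ (s : Finset ℤ) (g : ℤ → M), (∀ i, g i ∈ deg i) → (∑ i ∈ s, g i) = 0 →
    ∀ i ∈ s, g i = 0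

attribute [instance] GradedMod.acg GradedMod.mod

variable {G : GWA R σ v}

/-- A homomorphism of graded modules that shifts degrees by `n`, i.e. an element of
`Hom_gr(X, Y[n])`. -/
structure GHom (X Y : GradedMod G) (n : ℤ) : Type where
  toLin : X.M →ₗ[G.A] Y.M
  map_deg : ∀ i : ℤ, ∀ m ∈ X.deg i, toLin m ∈ Y.deg (i + n)

/-- `X` is isomorphic to `Y[n]` as a graded module. -/
def GIso (X Y : GradedMod G) (n : ℤ) : Prop :=
  ∃ f : GHom X Y n, Function.Bijective f.toLin

/-- A submodule is graded if every element of it is a sum of homogeneous elements of it. -/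
def IsGradedSub (X : GradedMod G) (N : Submodule G.A X.M) : Prop :=
  ∀ m ∈ N, ∃ (s : Finset ℤ) (g : ℤ → X.M),
    (∀ i, g i ∈ X.deg i) ∧ (∀ i, g i ∈ N) ∧ m = ∑ i ∈ s, g i

/-- `χ_λ = {k ∈ ℤ : σ^k(v) ∈ λ}`. -/
def chiSet (σ : R ≃ₐ[ℂ] R) (v : R) (lam : Ideal R) : Set ℤ := {k : ℤ | (σ ^ k) v ∈ lam}

/-- `X` is (a realization of) the graded module `A^λ = A/Aλ`: it is cyclic, generated by a
degree-zero element whose annihilator is the left ideal generated by `λ`. -/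
def IsStdMod (G : GWA R σ v) (lam : Ideal R) (X : GradedMod G) : Prop :=
  ∃ x ∈ X.deg 0, Submodule.span G.A {x} = ⊤ ∧
    ∀ a : G.A, a • x = 0 ↔ a ∈ Submodule.span G.A (G.emb '' (lam : Set R))

/-- A graded module is simple if it is nonzero and has no proper nontrivial graded submodules. -/
def IsSimpleGr (X : GradedMod G) : Prop :=
  (∃ m : X.M, m ≠ 0) ∧ ∀ N : Submodule G.A X.M, IsGradedSub X N → N = ⊥ ∨ N = ⊤

/-- Artinian graded module : the descending chain condition on graded submodules. -/
def IsArtinianGr (X : GradedMod G) : Prop :=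
  ∀ f : ℕ → Submodule G.A X.M, (∀ n, IsGradedSub X (f n)) →
    (∀ n, f (n + 1) ≤ f n) → ∃ n, ∀ m, n ≤ m → f m = f n

/-- `Y` is a graded subquotient of `X`. -/
def IsSubquotient (X Y : GradedMod G) : Prop :=
  ∃ (Q P : Submodule G.A X.M), IsGradedSub X Q ∧ IsGradedSub X P ∧ P ≤ Q ∧
    ∃ φ : Q →ₗ[G.A] Y.M, Function.Surjective φ ∧
      (∀ q : Q, φ q = 0 ↔ (q : X.M) ∈ P) ∧
      (∀ (i : ℤ) (q : Q), (q : X.M) ∈ X.deg i → φ q ∈ Y.deg i)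

/-- The (additive) span of the homogeneous components of `X` in degrees belonging to `S`. -/
def spanDegs (X : GradedMod G) (S : Set ℤ) : AddSubgroup X.M :=
  ⨆ i ∈ S, X.deg i

/-- The submodule `A^{λ,k}` of `A^λ`: the span of the components in degrees `< k` if `k ≤ 0`,
and in degrees `≥ k` if `k > 0`. -/
def stdPart (X : GradedMod G) (k : ℤ) : AddSubgroup X.M :=
  if k ≤ 0 then spanDegs X {i : ℤ | i < k} else spanDegs X {i : ℤ | k ≤ i}

/-- `δ(A^{λ,k})`. -/
def stdDegs (k : ℤ) : Set ℤ :=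
  if k ≤ 0 then Set.Iio k else Set.Ici k

section DegreeSets

open Set

variable {S χ : Set ℤ}

theorem exists_stdDegs_eq_inter_Ioi (h0 : (0 : ℤ) ∉ S)
    (hup : ∀ i, 0 < i → i ∈ S → i + 1 ∈ S)
    (hdown : ∀ i, 0 < i → i ∈ S → i ∉ χ → i - 1 ∈ S) (hne : ∃ i ∈ S, 0 < i) :
    ∃ k ∈ χ, 0 < k ∧ S ∩ Ioi 0 = stdDegs k := by
  obtain ⟨k, ⟨hkS, hk⟩, hmin⟩ :=
    Int.exists_least_of_bdd (P := fun i => i ∈ S ∧ 0 < i) ⟨0, fun i hi => hi.2.le⟩ hne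
  refine ⟨k, ?_, hk, ?_⟩
  · by_contra hχ
    have hpred := hdown k hk hkS hχ
    rcases eq_or_lt_of_le (Int.add_one_le_iff.2 hk) with h1 | h1
    · exact h0 (by rwa [← h1, zero_add, sub_self] at hpred)
    · linarith [hmin (k - 1) ⟨hpred, by omega⟩]
  · rw [stdDegs, if_neg (not_le.2 hk)]
    ext i
    refine ⟨fun hi => hmin i hi, fun hi => ⟨?_, lt_of_lt_of_le hk hi⟩⟩
    induction i, hi using Int.leInduction with
    | base => exact hkS
    | succ n hkn ih => exact hup n (lt_of_lt_of_le hk hkn) ih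

theorem exists_stdDegs_eq_inter_Iio (h0 : (0 : ℤ) ∉ S)
    (hdown : ∀ i, i < 0 → i ∈ S → i - 1 ∈ S)
    (hup : ∀ i, i < 0 → i ∈ S → i + 1 ∉ χ → i + 1 ∈ S) (hne : ∃ i ∈ S, i < 0) :
    ∃ k ∈ χ, k ≤ 0 ∧ S ∩ Iio 0 = stdDegs k := by
  obtain ⟨m, ⟨hmS, hm⟩, hmax⟩ :=
    Int.exists_greatest_of_bdd (P := fun i => i ∈ S ∧ i < 0) ⟨0, fun i hi => hi.2.le⟩ hne
  refine ⟨m + 1, ?_, by omega, ?_⟩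
  · by_contra hχ
    have hsucc := hup m hm hmS hχ
    rcases eq_or_lt_of_le (Int.add_one_le_iff.2 hm) with h1 | h1
    · exact h0 (h1 ▸ hsucc)
    · linarith [hmax (m + 1) ⟨hsucc, h1⟩]
  · rw [stdDegs, if_pos (by omega)]
    ext i
    refine ⟨fun hi => Int.lt_add_one_iff.2 (hmax i hi), fun hi => ?_⟩
    replace hi : i ≤ m := Int.lt_add_one_iff.1 hi
    refine ⟨?_, lt_of_le_of_lt hi hm⟩
    induction i, hi using Int.leInductionDown with
    | base => exact hmS
    | pred n hnm ih => exact hdown n (lt_of_le_of_lt hnm hm) ih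

/-- The degree sets that a proper nontrivial graded submodule of `A^λ` can have. -/
theorem eq_stdDegs_or_eq_stdDegs_union (h0 : (0 : ℤ) ∉ S) (hne : S.Nonempty)
    (hup : ∀ i, 0 < i → i ∈ S → i + 1 ∈ S)
    (hdown : ∀ i, 0 < i → i ∈ S → i ∉ χ → i - 1 ∈ S)
    (hdown' : ∀ i, i < 0 → i ∈ S → i - 1 ∈ S)
    (hup' : ∀ i, i < 0 → i ∈ S → i + 1 ∉ χ → i + 1 ∈ S) :
    (∃ k ∈ χ, S = stdDegs k) ∨
      (∃ k ∈ χ, ∃ k' ∈ χ, k ≤ 0 ∧ 0 < k' ∧ S = stdDegs k ∪ stdDegs k') := by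
  have hne0 : ∀ i ∈ S, i ≠ 0 := fun i hi h => h0 (h ▸ hi)
  by_cases hneg : ∃ i ∈ S, i < 0 <;> by_cases hpos : ∃ i ∈ S, 0 < i
  · obtain ⟨k, hkχ, hk, hkS⟩ := exists_stdDegs_eq_inter_Iio h0 hdown' hup' hneg
    obtain ⟨k', hk'χ, hk', hk'S⟩ := exists_stdDegs_eq_inter_Ioi h0 hup hdown hpos
    refine Or.inr ⟨k, hkχ, k', hk'χ, hk, hk', ?_⟩
    rw [← hkS, ← hk'S, ← inter_union_distrib_left, eq_comm, inter_eq_left]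
    intro i hi
    rcases lt_or_gt_of_ne (hne0 i hi) with h | h
    exacts [Or.inl h, Or.inr h]
  · obtain ⟨k, hkχ, -, hkS⟩ := exists_stdDegs_eq_inter_Iio h0 hdown' hup' hneg
    refine Or.inl ⟨k, hkχ, ?_⟩
    rw [← hkS, eq_comm, inter_eq_left]
    intro i hi
    exact lt_of_le_of_ne (not_lt.1 fun h => hpos ⟨i, hi, h⟩) (hne0 i hi)
  · obtain ⟨k', hk'χ, -, hk'S⟩ := exists_stdDegs_eq_inter_Ioi h0 hup hdown hpos
    refine Or.inl ⟨k', hk'χ, ?_⟩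
    rw [← hk'S, eq_comm, inter_eq_left]
    intro i hi
    exact lt_of_le_of_ne (not_lt.1 fun h => hneg ⟨i, hi, h⟩) (hne0 i hi).symm
  · obtain ⟨i, hi⟩ := hne
    rcases lt_or_gt_of_ne (hne0 i hi) with h | h
    exacts [(hneg ⟨i, hi, h⟩).elim, (hpos ⟨i, hi, h⟩).elim]

end DegreeSets

namespace GWA

def homGen (G : GWA R σ v) (i : ℤ) : G.A :=
  if 0 ≤ i then G.tp ^ i.toNat else G.tm ^ (-i).toNat

theorem homGen_of_nonneg {i : ℤ} (h : 0 ≤ i) : G.homGen i = G.tp ^ i.toNat := if_pos h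

theorem homGen_of_neg {i : ℤ} (h : i < 0) : G.homGen i = G.tm ^ (-i).toNat := if_neg (not_le.2 h)

theorem homGen_zero : G.homGen 0 = 1 := by
  simp [homGen_of_nonneg le_rfl]

theorem exists_eq_emb_mul_homGen {i : ℤ} {a : G.A} (ha : a ∈ G.deg i) :
    ∃ r : R, a = G.emb r * G.homGen i := by
  rcases le_or_gt 0 i with h | h
  · obtain ⟨r, hr, -⟩ := G.free_pos i.toNat a (by rwa [Int.toNat_of_nonneg h])
    exact ⟨r, by rw [hr, homGen_of_nonneg h]⟩
  · obtain ⟨r, hr, -⟩ := G.free_neg (-i).toNat a (by rwa [Int.toNat_of_nonneg (by omega), neg_neg])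
    exact ⟨r, by rw [hr, homGen_of_neg h]⟩

theorem emb_mul_tp_pow (r : R) (n : ℕ) : G.emb r * G.tp ^ n = G.tp ^ n * G.emb ((σ ^ n) r) := by
  induction n generalizing r with
  | zero => simp
  | succ n ih =>
    rw [pow_succ', ← mul_assoc, G.rel1, mul_assoc, ih, ← mul_assoc, ← pow_succ', pow_succ σ]
    rfl

theorem emb_mul_tm (r : R) : G.emb r * G.tm = G.tm * G.emb (σ⁻¹ r) := by
  simpa using G.rel2 (σ⁻¹ r)

theorem emb_mul_tm_pow (r : R) (n : ℕ) :
    G.emb r * G.tm ^ n = G.tm ^ n * G.emb ((σ⁻¹ ^ n) r) := by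
  induction n generalizing r with
  | zero => simp
  | succ n ih =>
    rw [pow_succ', ← mul_assoc, emb_mul_tm, mul_assoc, ih, ← mul_assoc, ← pow_succ', pow_succ σ⁻¹]
    rfl

theorem emb_mul_homGen (r : R) (i : ℤ) : G.emb r * G.homGen i = G.homGen i * G.emb ((σ ^ i) r) := by
  rcases le_or_gt 0 i with h | h
  · rw [homGen_of_nonneg h, emb_mul_tp_pow, ← zpow_natCast, Int.toNat_of_nonneg h]
  · rw [homGen_of_neg h, emb_mul_tm_pow, inv_pow, ← zpow_natCast, ← zpow_neg,
      Int.toNat_of_nonneg (by omega), neg_neg]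

theorem tp_mul_homGen_of_nonneg {i : ℤ} (h : 0 ≤ i) : G.tp * G.homGen i = G.homGen (i + 1) := by
  rw [homGen_of_nonneg h, homGen_of_nonneg (by omega), show (i + 1).toNat = i.toNat + 1 by omega,
    pow_succ']

theorem tm_mul_homGen_of_nonpos {i : ℤ} (h : i ≤ 0) : G.tm * G.homGen i = G.homGen (i - 1) := by
  rw [homGen_of_neg (by omega : i - 1 < 0), show (-(i - 1)).toNat = (-i).toNat + 1 by omega,
    pow_succ']
  rcases eq_or_lt_of_le h with rfl | h'
  · simp [homGen_zero]
  · rw [homGen_of_neg h']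

theorem tm_mul_homGen_of_pos {i : ℤ} (h : 0 < i) :
    G.tm * G.homGen i = G.emb (σ v) * G.homGen (i - 1) := by
  rw [homGen_of_nonneg h.le, homGen_of_nonneg (by omega : 0 ≤ i - 1),
    show i.toNat = (i - 1).toNat + 1 by omega, pow_succ', ← mul_assoc, G.rel3]

theorem tp_mul_homGen_of_neg {i : ℤ} (h : i < 0) :
    G.tp * G.homGen i = G.emb v * G.homGen (i + 1) := by
  rw [← G.rel4, mul_assoc, tm_mul_homGen_of_nonpos (by omega), add_sub_cancel_right]

end GWA

namespace GradedMod

variable (X : GradedMod G)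

theorem eq_zero_of_sum_mem_deg {s : Finset ℤ} {g : ℤ → X.M} (hg : ∀ i, g i ∈ X.deg i) {i₀ : ℤ}
    (hsum : ∑ i ∈ s, g i ∈ X.deg i₀) {j : ℤ} (hj : j ∈ s) (hji : j ≠ i₀) : g j = 0 := by
  classical
  -- Subtract the sum, placed in degree `i₀`, from the family `g`: the result sums to zero.
  set g' : ℤ → X.M := fun i => (if i ∈ s then g i else 0) - if i = i₀ then ∑ i ∈ s, g i else 0
  have hg' : ∀ i, g' i ∈ X.deg i := fun i => by
    refine sub_mem ?_ ?_ <;> split_ifs with h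
    exacts [hg i, zero_mem _, h ▸ hsum, zero_mem _]
  have hsum' : ∑ i ∈ insert i₀ s, g' i = 0 := by
    rw [Finset.sum_sub_distrib, Finset.sum_ite_eq', if_pos (Finset.mem_insert_self _ _),
      Finset.sum_ite_mem, Finset.inter_eq_right.2 (Finset.subset_insert _ _), sub_self]
  simpa [g', hj, hji] using X.indep _ g' hg' hsum' j (Finset.mem_insert_of_mem hj)

theorem mem_spanDegs {S : Set ℤ} {i : ℤ} (hi : i ∈ S) {m : X.M} (hm : m ∈ X.deg i) :
    m ∈ spanDegs X S :=
  le_iSup₂ (f := fun i (_ : i ∈ S) => X.deg i) i hi hm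

theorem spanDegs_union (S T : Set ℤ) : spanDegs X (S ∪ T) = spanDegs X S ⊔ spanDegs X T :=
  iSup_union

theorem stdPart_eq_spanDegs_stdDegs (k : ℤ) : stdPart X k = spanDegs X (stdDegs k) := by
  unfold stdPart stdDegs
  split_ifs <;> rfl

end GradedMod

theorem IsGradedSub.toAddSubgroup_eq_spanDegs {X : GradedMod G} {N : Submodule G.A X.M}
    (hN : IsGradedSub X N) {S : Set ℤ} (hle : ∀ i ∈ S, X.deg i ≤ N.toAddSubgroup)
    (hmem : ∀ i, ∀ m ∈ X.deg i, m ∈ N → m ≠ 0 → i ∈ S) : N.toAddSubgroup = spanDegs X S := by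
  refine le_antisymm (fun m hm => ?_) (iSup₂_le hle)
  obtain ⟨s, g, hgdeg, hgN, rfl⟩ := hN m hm
  refine AddSubgroup.sum_mem _ fun j _ => ?_
  by_cases hgj : g j = 0
  · exact hgj ▸ zero_mem _
  · exact X.mem_spanDegs (hmem j (g j) (hgdeg j) (hgN j) hgj) (hgdeg j)

section StdMod

open GWA

variable {X : GradedMod G}

/-- `δ(N)`, when `x` generates `A^λ`. -/
def degSet (N : Submodule G.A X.M) (x : X.M) : Set ℤ := {i | G.homGen i • x ∈ N}

theorem mem_degSet {N : Submodule G.A X.M} {x : X.M} {i : ℤ} :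
    i ∈ degSet N x ↔ G.homGen i • x ∈ N :=
  Iff.rfl

variable {x : X.M} {lam : Ideal R} {N : Submodule G.A X.M}

theorem exists_eq_emb_mul_homGen_smul (hx0 : x ∈ X.deg 0) (hspan : Submodule.span G.A {x} = ⊤)
    {i : ℤ} {m : X.M} (hm : m ∈ X.deg i) : ∃ r : R, m = (G.emb r * G.homGen i) • x := by
  obtain ⟨a, rfl⟩ := Submodule.mem_span_singleton.1 (hspan ▸ Submodule.mem_top : m ∈ _)
  obtain ⟨s, f, hf, rfl⟩ := G.decomp a
  have hdeg : ∀ j, f j • x ∈ X.deg j := fun j => by simpa using X.smul_mem (hf j) hx0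
  rw [Finset.sum_smul] at hm ⊢
  have hz : ∀ j ∈ s, j ≠ i → f j • x = 0 := fun j hj => X.eq_zero_of_sum_mem_deg hdeg hm hj
  by_cases hi : i ∈ s
  · obtain ⟨r, hr⟩ := G.exists_eq_emb_mul_homGen (hf i)
    exact ⟨r, by rw [Finset.sum_eq_single_of_mem i hi hz, hr]⟩
  · refine ⟨0, ?_⟩
    rw [Finset.sum_eq_zero fun j hj => hz j hj fun h => hi (h ▸ hj), map_zero, zero_mul, zero_smul]

theorem homGen_smul_mem_of_emb_mul_smul_mem (hlam : lam.IsMaximal)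
    (hkill : ∀ l ∈ lam, G.emb l • x = 0) {i : ℤ} {r : R} (hr : (σ ^ i) r ∉ lam)
    (hm : (G.emb r * G.homGen i) • x ∈ N) : G.homGen i • x ∈ N := by
  obtain ⟨b, c, hc, hbc⟩ := hlam.exists_inv hr
  have hinv : G.emb ((σ ^ (-i)) b) * (G.emb r * G.homGen i) = G.homGen i * G.emb (1 - c) := by
    rw [← mul_assoc, ← map_mul, emb_mul_homGen, map_mul, ← AlgEquiv.mul_apply, ← zpow_add,
      add_neg_cancel, zpow_zero, AlgEquiv.one_apply, ← hbc, add_sub_cancel_right]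
  have h := N.smul_mem (G.emb ((σ ^ (-i)) b)) hm
  rwa [← mul_smul, hinv, mul_smul, map_sub, map_one, sub_smul, one_smul, hkill c hc,
    sub_zero] at h

theorem add_one_mem_degSet {i : ℤ} (hi : 0 ≤ i) (h : i ∈ degSet N x) : i + 1 ∈ degSet N x := by
  rw [mem_degSet, ← tp_mul_homGen_of_nonneg hi, mul_smul]
  exact N.smul_mem _ h

theorem sub_one_mem_degSet {i : ℤ} (hi : i ≤ 0) (h : i ∈ degSet N x) : i - 1 ∈ degSet N x := by
  rw [mem_degSet, ← tm_mul_homGen_of_nonpos hi, mul_smul]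
  exact N.smul_mem _ h

theorem sub_one_mem_degSet_of_notMem_chiSet (hlam : lam.IsMaximal)
    (hkill : ∀ l ∈ lam, G.emb l • x = 0) {i : ℤ} (hi : 0 < i) (h : i ∈ degSet N x)
    (hχ : i ∉ chiSet σ v lam) : i - 1 ∈ degSet N x := by
  have hσ : (σ ^ (i - 1)) (σ v) = (σ ^ i) v := by
    rw [← AlgEquiv.mul_apply, ← zpow_add_one, sub_add_cancel]
  refine homGen_smul_mem_of_emb_mul_smul_mem hlam hkill (r := σ v) (hσ ▸ hχ) ?_
  rw [← tm_mul_homGen_of_pos hi, mul_smul]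
  exact N.smul_mem _ h

theorem add_one_mem_degSet_of_notMem_chiSet (hlam : lam.IsMaximal)
    (hkill : ∀ l ∈ lam, G.emb l • x = 0) {i : ℤ} (hi : i < 0) (h : i ∈ degSet N x)
    (hχ : i + 1 ∉ chiSet σ v lam) : i + 1 ∈ degSet N x := by
  refine homGen_smul_mem_of_emb_mul_smul_mem hlam hkill (r := v) hχ ?_
  rw [← tp_mul_homGen_of_neg hi, mul_smul]
  exact N.smul_mem _ h

theorem zero_notMem_degSet (hspan : Submodule.span G.A {x} = ⊤) (htop : N ≠ ⊤) :
    0 ∉ degSet N x := by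
  intro h
  rw [mem_degSet, homGen_zero, one_smul] at h
  exact htop (eq_top_iff.2 (hspan ▸ (Submodule.span_singleton_le_iff_mem x N).2 h))

theorem deg_le_of_mem_degSet (hx0 : x ∈ X.deg 0) (hspan : Submodule.span G.A {x} = ⊤)
    {i : ℤ} (h : i ∈ degSet N x) : X.deg i ≤ N.toAddSubgroup := fun m hm => by
  obtain ⟨r, rfl⟩ := exists_eq_emb_mul_homGen_smul hx0 hspan hm
  rw [Submodule.mem_toAddSubgroup, mul_smul]
  exact N.smul_mem _ h

theorem mem_degSet_of_mem_deg (hx0 : x ∈ X.deg 0) (hspan : Submodule.span G.A {x} = ⊤)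
    (hlam : lam.IsMaximal) (hkill : ∀ l ∈ lam, G.emb l • x = 0) {i : ℤ} {m : X.M}
    (hm : m ∈ X.deg i) (hmN : m ∈ N) (hm0 : m ≠ 0) : i ∈ degSet N x := by
  obtain ⟨r, rfl⟩ := exists_eq_emb_mul_homGen_smul hx0 hspan hm
  refine homGen_smul_mem_of_emb_mul_smul_mem hlam hkill (fun hr => hm0 ?_) hmN
  rw [emb_mul_homGen, mul_smul, hkill _ hr, smul_zero]

theorem toAddSubgroup_eq_spanDegs_degSet (hx0 : x ∈ X.deg 0)
    (hspan : Submodule.span G.A {x} = ⊤) (hlam : lam.IsMaximal)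
    (hkill : ∀ l ∈ lam, G.emb l • x = 0) (hN : IsGradedSub X N) :
    N.toAddSubgroup = spanDegs X (degSet N x) :=
  hN.toAddSubgroup_eq_spanDegs (fun _ => deg_le_of_mem_degSet hx0 hspan)
    fun _ _ hm hmN hm0 => mem_degSet_of_mem_deg hx0 hspan hlam hkill hm hmN hm0

theorem degSet_nonempty (hNS : N.toAddSubgroup = spanDegs X (degSet N x)) (hbot : N ≠ ⊥) :
    (degSet N x).Nonempty := by
  refine Set.nonempty_iff_ne_empty.2 fun h => hbot (Submodule.toAddSubgroup_injective ?_)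
  rw [hNS, h, spanDegs, iSup_emptyset, Submodule.bot_toAddSubgroup]

end StdMod

theorem stmt0_general {R : Type} [CommRing R] [Algebra ℂ R]
    {σ : R ≃ₐ[ℂ] R} {v : R} (G : GWA R σ v)
    (lam : Ideal R) (hlam : lam.IsMaximal)
    (X : GradedMod G) (hX : IsStdMod G lam X)
    (N : Submodule G.A X.M) (hN : IsGradedSub X N) (hbot : N ≠ ⊥) (htop : N ≠ ⊤) :
    (∃ k ∈ chiSet σ v lam, N.toAddSubgroup = stdPart X k) ∨
    (∃ k ∈ chiSet σ v lam, ∃ k' ∈ chiSet σ v lam, k ≤ 0 ∧ 0 < k' ∧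
      N.toAddSubgroup = stdPart X k ⊔ stdPart X k') := by
  obtain ⟨x, hx0, hspan, hann⟩ := hX
  have hkill : ∀ l ∈ lam, G.emb l • x = 0 :=
    fun l hl => (hann _).2 (Submodule.subset_span ⟨l, hl, rfl⟩)
  have hNS := toAddSubgroup_eq_spanDegs_degSet hx0 hspan hlam hkill hN
  rcases eq_stdDegs_or_eq_stdDegs_union (zero_notMem_degSet hspan htop)
      (degSet_nonempty hNS hbot) (fun _ hi => add_one_mem_degSet hi.le)
      (fun _ hi => sub_one_mem_degSet_of_notMem_chiSet hlam hkill hi)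
      (fun _ hi => sub_one_mem_degSet hi.le)
      (fun _ hi => add_one_mem_degSet_of_notMem_chiSet hlam hkill hi) with
    ⟨k, hk, hS⟩ | ⟨k, hk, k', hk', hk0, hk'0, hS⟩
  · exact Or.inl ⟨k, hk, by rw [hNS, hS, X.stdPart_eq_spanDegs_stdDegs]⟩
  · refine Or.inr ⟨k, hk, k', hk', hk0, hk'0, ?_⟩
    rw [hNS, hS, X.spanDegs_union, X.stdPart_eq_spanDegs_stdDegs, X.stdPart_eq_spanDegs_stdDegs]

/-- Every proper nontrivial graded submodule of `A^λ` is `A^{λ,k}` for some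
`k ∈ χ_λ`, or `A^{λ,k} ⊕ A^{λ,k'}` for some `k, k' ∈ χ_λ` with `k ≤ 0 < k'`. -/
theorem stmt0 {R : Type} [CommRing R] [Algebra ℂ R] (hfg : Algebra.FiniteType ℂ R)
    {σ : R ≃ₐ[ℂ] R} {v : R} (G : GWA R σ v)
    (lam : Ideal R) (hlam : lam.IsMaximal)
    (X : GradedMod G) (hX : IsStdMod G lam X)
    (N : Submodule G.A X.M) (hN : IsGradedSub X N) (hbot : N ≠ ⊥) (htop : N ≠ ⊤) :
    (∃ k ∈ chiSet σ v lam, N.toAddSubgroup = stdPart X k) ∨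
    (∃ k ∈ chiSet σ v lam, ∃ k' ∈ chiSet σ v lam, k ≤ 0 ∧ 0 < k' ∧
      N.toAddSubgroup = stdPart X k ⊔ stdPart X k') :=
  stmt0_general G lam hlam X hX N hN hbot htop
end
end

section
/- A^λ has a unique maximal graded submodule; let S^λ denote the corresponding simple quotient. Every simple graded A-module is isomorphic to S^λ[i] for some maximal ideal λ of R and some i ∈ ℤ. -/
noncomputable section

variable {R : Type} [CommRing R] [Algebra ℂ R] {σ : R ≃ₐ[ℂ] R} {v : R}

variable {G : GWA R σ v}

/-!
If `x` generates `A^λ`, every homogeneous element of `A^λ` is `a • x` with `a` homogeneous, and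
`A_0 = R`; as `R = ℂ + λ` by the Nullstellensatz, `(A^λ)_0 = ℂ x`. A graded submodule with a
nonzero element of degree `0` therefore contains `x`, so the proper graded submodules are exactly
those with zero degree-zero part, and their sum is again one of them.

Conversely, a nonzero homogeneous `s` in a simple graded module `S` generates it, and
`λ = Ann_R(s)` is maximal: for `r ∉ λ`, `emb r • s` generates `s` back, necessarily through a
degree-zero element `emb r'`, so `r' r ≡ 1 mod λ`. Then `a ↦ a • s` induces a graded surjection
`A^λ → S`.
-/

open DirectSum

theorem Ideal.exists_algebraMap_sub_mem_of_isMaximal {k R : Type*} [Field k] [IsAlgClosed k]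
    [CommRing R] [Algebra k R] (hfg : Algebra.FiniteType k R) {lam : Ideal R} [lam.IsMaximal]
    (r : R) : ∃ c : k, r - algebraMap k R c ∈ lam := by
  let := Ideal.Quotient.field lam
  have : Algebra.FiniteType k (R ⧸ lam) := .of_surjective (Ideal.Quotient.mkₐ k lam)
    (Ideal.Quotient.mkₐ_surjective k lam)
  have : Module.Finite k (R ⧸ lam) := finite_of_finite_type_of_isJacobsonRing k (R ⧸ lam)
  obtain ⟨c, hc⟩ := (IsAlgClosed.algebraMap_bijective_of_isIntegral (k := k)).2
    (Ideal.Quotient.mk lam r)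
  exact ⟨c, Ideal.Quotient.eq.mp hc.symm⟩

namespace DirectSum

theorem isInternal_of_exists_sum_of_sum_eq_zero {ι M σ' : Type*} [DecidableEq ι] [AddCommGroup M]
    [SetLike σ' M] [AddSubgroupClass σ' M] {ℳ : ι → σ'}
    (exists_sum : ∀ m : M, ∃ (s : Finset ι) (g : ι → M), (∀ i, g i ∈ ℳ i) ∧ m = ∑ i ∈ s, g i)
    (sum_eq_zero : ∀ (s : Finset ι) (g : ι → M), (∀ i, g i ∈ ℳ i) → ∑ i ∈ s, g i = 0 →
      ∀ i ∈ s, g i = 0) :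
    IsInternal ℳ := by
  classical
  refine ⟨(injective_iff_map_eq_zero _).mpr fun f hf => ?_, fun m => ?_⟩
  · rw [coeAddMonoidHom_eq_dfinsuppSum] at hf
    ext i
    by_cases hi : i ∈ f.support
    · exact sum_eq_zero f.support (fun i => f i) (fun i => (f i).2) hf i hi
    · simp_all
  · obtain ⟨s, g, hg, rfl⟩ := exists_sum m
    exact ⟨∑ i ∈ s, of (fun i => ℳ i) i ⟨g i, hg i⟩, by simp⟩

variable {ι M σ' : Type*} [DecidableEq ι] [AddCommMonoid M] [SetLike σ' M] [AddSubmonoidClass σ' M]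
variable (ℳ : ι → σ') [Decomposition ℳ]

theorem coe_decompose_sum_of_mem (s : Finset ι) {g : ι → M} (hg : ∀ i, g i ∈ ℳ i) (i : ι) :
    (decompose ℳ (∑ k ∈ s, g k) i : M) = if i ∈ s then g i else 0 := by
  have h (k : ι) : (decompose ℳ (g k) i : M) = if k = i then g k else 0 := by
    split_ifs with hk
    · exact hk ▸ decompose_of_mem_same ℳ (hg k)
    · exact decompose_of_mem_ne ℳ (hg k) hk
  rw [decompose_sum, DFinsupp.finsetSum_apply, AddSubmonoidClass.coe_finsetSum]
  simp_rw [h]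
  exact Finset.sum_ite_eq' s i g

end DirectSum

theorem Submodule.IsHomogeneous.sSup {ι σ' A M : Type*} [Semiring A] [AddCommMonoid M]
    [Module A M] [DecidableEq ι] [SetLike σ' M] [AddSubmonoidClass σ' M] (ℳ : ι → σ')
    [Decomposition ℳ] {𝒩 : Set (Submodule A M)} (h : ∀ N ∈ 𝒩, N.IsHomogeneous ℳ) :
    (sSup 𝒩).IsHomogeneous ℳ := by
  intro i m hm
  rw [sSup_eq_iSup'] at hm ⊢
  refine Submodule.iSup_induction _ (motive := fun m => (decompose ℳ m i : M) ∈ _) hm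
    (fun N m hm => Submodule.mem_iSup_of_mem N (h N N.2 i hm)) (by simp) fun m m' hm hm' => ?_
  simpa using add_mem hm hm'

namespace GWA

variable (G)

theorem one_mem_deg_zero : (1 : G.A) ∈ G.deg 0 := by
  simpa using G.algmap_mem 1

instance gradedRing : GradedRing G.deg :=
  { (isInternal_of_exists_sum_of_sum_eq_zero G.decomp G.indep).chooseDecomposition with
    one_mem := G.one_mem_deg_zero
    mul_mem := fun _ _ _ _ => G.mul_mem }

theorem exists_emb_eq_of_mem_deg_zero {a : G.A} (ha : a ∈ G.deg 0) : ∃ r : R, a = G.emb r := by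
  obtain ⟨r, hr, -⟩ := G.free_pos 0 a (by simpa using ha)
  exact ⟨r, by simpa using hr⟩

theorem emb_injective : Function.Injective G.emb := by
  intro r r' h
  obtain ⟨u, -, hu⟩ := G.free_pos 0 (G.emb r) (by simpa using G.emb_mem r)
  rw [hu r (by simp), hu r' (by simp [h])]

variable {G}

theorem emb_mem_span_emb_iff {lam : Ideal R} {l : R} :
    G.emb l ∈ Ideal.span (G.emb '' lam) ↔ l ∈ lam := by
  refine ⟨fun hl => ?_, fun hl => Ideal.subset_span ⟨l, hl, rfl⟩⟩
  -- the degree-zero component of `∑ aᵢ emb(lᵢ)` is `∑ (aᵢ)₀ emb(lᵢ) ∈ emb(λ)`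
  suffices h : ∀ z ∈ Ideal.span (G.emb '' lam), ∀ a : G.A,
      ∃ l' ∈ lam, (decompose G.deg (a * z) 0 : G.A) = G.emb l' by
    obtain ⟨l', hl', he⟩ := h _ hl 1
    rw [one_mul, decompose_of_mem_same G.deg (G.emb_mem l), G.emb_injective.eq_iff] at he
    exact he ▸ hl'
  intro z hz
  induction hz using Submodule.span_induction with
  | mem z hz =>
    obtain ⟨l, hl, rfl⟩ := hz
    intro a
    obtain ⟨r, hr⟩ := G.exists_emb_eq_of_mem_deg_zero (decompose G.deg a 0).2
    refine ⟨r * l, Ideal.mul_mem_left _ _ hl, ?_⟩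
    rw [← add_zero (0 : ℤ), coe_decompose_mul_add_of_right_mem G.deg (G.emb_mem l), hr, map_mul]
  | zero => exact fun _ => ⟨0, lam.zero_mem, by simp⟩
  | add y z _ _ hy hz =>
    intro a
    obtain ⟨l₁, hl₁, h₁⟩ := hy a
    obtain ⟨l₂, hl₂, h₂⟩ := hz a
    exact ⟨l₁ + l₂, lam.add_mem hl₁ hl₂, by
      rw [mul_add, decompose_add, DirectSum.add_apply, AddMemClass.coe_add, h₁, h₂, map_add]⟩
  | smul b z _ hz => exact fun a => by simpa [mul_assoc] using hz (a * b)

end GWA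

namespace GradedMod

instance decomposition (X : GradedMod G) : Decomposition X.deg :=
  (isInternal_of_exists_sum_of_sum_eq_zero X.decomp X.indep).chooseDecomposition

variable (X : GradedMod G)

theorem coe_decompose_smul_of_mem {m : X.M} {d : ℤ} (hm : m ∈ X.deg d) (a : G.A) (n : ℤ) :
    (decompose X.deg (a • m) n : X.M) = (decompose G.deg a (n - d) : G.A) • m := by
  induction a using Decomposition.inductionOn G.deg with
  | zero => simp
  | @homogeneous j a =>
    by_cases h : j + d = n
    · rw [decompose_of_mem_same X.deg (h ▸ X.smul_mem a.2 hm),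
        decompose_of_mem_same G.deg (by rw [← h, add_sub_cancel_right]; exact a.2)]
    · rw [decompose_of_mem_ne X.deg (X.smul_mem a.2 hm) h,
        decompose_of_mem_ne G.deg a.2 (by omega), zero_smul]
  | add a b ha hb => simp [add_smul, ha, hb]

theorem isGradedSub_iff {N : Submodule G.A X.M} : IsGradedSub X N ↔ N.IsHomogeneous X.deg := by
  classical
  refine ⟨fun hN i m hm => ?_, fun hN m hm => ?_⟩
  · obtain ⟨s, g, hg, hgN, rfl⟩ := hN m hm
    rw [coe_decompose_sum_of_mem X.deg s hg]
    split_ifs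
    exacts [hgN i, N.zero_mem]
  · exact ⟨_, fun i => decompose X.deg m i, fun i => (decompose X.deg m i).2, fun i => hN i hm,
      (sum_support_decompose X.deg m).symm⟩

theorem isGradedSub_span_singleton {s : X.M} {d : ℤ} (hs : s ∈ X.deg d) :
    IsGradedSub X (Submodule.span G.A {s}) := by
  rw [isGradedSub_iff]
  intro i m hm
  obtain ⟨a, rfl⟩ := Submodule.mem_span_singleton.mp hm
  rw [coe_decompose_smul_of_mem X hs]
  exact Submodule.smul_mem _ _ (Submodule.mem_span_singleton_self s)

theorem exists_mem_deg_ne_zero {m : X.M} (hm : m ≠ 0) : ∃ i, ∃ s ∈ X.deg i, s ≠ 0 := by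
  by_contra! h
  exact hm ((decompose X.deg).injective (by ext i; simp [h i _ (decompose X.deg m i).2]))

variable {lam : Ideal R} {X : GradedMod G} {x : X.M}

theorem ne_zero_of_forall_smul_eq_zero_iff
    (hann : ∀ a : G.A, a • x = 0 ↔ a ∈ Ideal.span (G.emb '' lam)) (hlam : lam ≠ ⊤) : x ≠ 0 := by
  intro h
  apply hlam
  rw [Ideal.eq_top_iff_one, ← GWA.emb_mem_span_emb_iff (G := G), map_one]
  exact (hann 1).mp (by rw [h, smul_zero])

theorem exists_eq_algebraMap_smul_of_mem_deg_zero (hfg : Algebra.FiniteType ℂ R)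
    [lam.IsMaximal] (hx : x ∈ X.deg 0) (hspan : Submodule.span G.A {x} = ⊤)
    (hann : ∀ a : G.A, a • x = 0 ↔ a ∈ Ideal.span (G.emb '' lam)) {m : X.M} (hm : m ∈ X.deg 0) :
    ∃ c : ℂ, m = algebraMap ℂ G.A c • x := by
  obtain ⟨a, rfl⟩ := Submodule.mem_span_singleton.mp (hspan ▸ Submodule.mem_top (x := m))
  obtain ⟨r, hr⟩ := G.exists_emb_eq_of_mem_deg_zero (decompose G.deg a 0).2
  obtain ⟨c, hc⟩ := Ideal.exists_algebraMap_sub_mem_of_isMaximal hfg (lam := lam) r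
  refine ⟨c, ?_⟩
  rw [← decompose_of_mem_same X.deg hm, X.coe_decompose_smul_of_mem hx, sub_zero, hr,
    ← sub_eq_zero, ← sub_smul, ← G.emb.commutes c, ← map_sub]
  exact (hann _).mpr (Ideal.subset_span ⟨_, hc, rfl⟩)

theorem decompose_zero_eq_zero_of_isGradedSub_of_ne_top (hfg : Algebra.FiniteType ℂ R)
    [lam.IsMaximal] (hx : x ∈ X.deg 0) (hspan : Submodule.span G.A {x} = ⊤)
    (hann : ∀ a : G.A, a • x = 0 ↔ a ∈ Ideal.span (G.emb '' lam)) {N : Submodule G.A X.M}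
    (hN : IsGradedSub X N) (hNt : N ≠ ⊤) {m : X.M} (hm : m ∈ N) :
    (decompose X.deg m 0 : X.M) = 0 := by
  obtain ⟨c, hc⟩ :=
    exists_eq_algebraMap_smul_of_mem_deg_zero hfg hx hspan hann (decompose X.deg m 0).2
  by_contra hne
  have hc0 : c ≠ 0 := by
    rintro rfl
    rw [map_zero, zero_smul] at hc
    exact hne hc
  have hxN : x ∈ N := by
    have := N.smul_mem (algebraMap ℂ G.A c⁻¹) ((X.isGradedSub_iff).mp hN 0 hm)
    rwa [hc, smul_smul, ← map_mul, inv_mul_cancel₀ hc0, map_one, one_smul] at this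
  apply hNt
  rw [eq_top_iff, ← hspan, Submodule.span_le, Set.singleton_subset_iff]
  exact hxN

theorem exists_isGradedSub_ne_top_forall_le (hfg : Algebra.FiniteType ℂ R)
    [lam.IsMaximal] (hx : x ∈ X.deg 0) (hspan : Submodule.span G.A {x} = ⊤)
    (hann : ∀ a : G.A, a • x = 0 ↔ a ∈ Ideal.span (G.emb '' lam)) :
    ∃ N : Submodule G.A X.M, (IsGradedSub X N ∧ N ≠ ⊤) ∧
      ∀ N' : Submodule G.A X.M, IsGradedSub X N' → N' ≠ ⊤ → N' ≤ N := by
  set 𝒩 := {N : Submodule G.A X.M | IsGradedSub X N ∧ N ≠ ⊤}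
  refine ⟨sSup 𝒩, ⟨?_, fun htop => ?_⟩, fun N' hN' hN't => le_sSup ⟨hN', hN't⟩⟩
  · exact X.isGradedSub_iff.mpr
      (Submodule.IsHomogeneous.sSup X.deg fun N hN => X.isGradedSub_iff.mp hN.1)
  · have hx𝒩 : x ∈ ⨆ N : 𝒩, (N : Submodule G.A X.M) :=
      sSup_eq_iSup' 𝒩 ▸ htop ▸ Submodule.mem_top
    have hx0 : (decompose X.deg x 0 : X.M) = 0 :=
      Submodule.iSup_induction _ (motive := fun m => (decompose X.deg m 0 : X.M) = 0) hx𝒩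
        (fun N _ hm =>
          decompose_zero_eq_zero_of_isGradedSub_of_ne_top hfg hx hspan hann N.2.1 N.2.2 hm)
        (by simp) fun _ _ h h' => by simp [h, h']
    rw [decompose_of_mem_same X.deg hx] at hx0
    exact ne_zero_of_forall_smul_eq_zero_iff hann (Ideal.IsMaximal.ne_top ‹_›) hx0

/-- `Ann_R(m)`, for `R` acting through `G.emb`. -/
def ann (S : GradedMod G) (m : S.M) : Ideal R :=
  Ideal.comap G.emb (LinearMap.ker (LinearMap.toSpanSingleton G.A S.M m))

theorem mem_ann {S : GradedMod G} {m : S.M} {r : R} : r ∈ S.ann m ↔ G.emb r • m = 0 := Iff.rfl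

end GradedMod

section Simple

variable {S : GradedMod G} {s : S.M} {d : ℤ}

theorem IsSimpleGr.span_singleton_eq_top (hS : IsSimpleGr S) (hs : s ∈ S.deg d) (hs0 : s ≠ 0) :
    Submodule.span G.A {s} = ⊤ :=
  (hS.2 _ (S.isGradedSub_span_singleton hs)).resolve_left fun h =>
    hs0 (Submodule.span_singleton_eq_bot.mp h)

theorem IsSimpleGr.isMaximal_ann (hS : IsSimpleGr S) (hs : s ∈ S.deg d) (hs0 : s ≠ 0) :
    (S.ann s).IsMaximal := by
  rw [Ideal.isMaximal_iff]
  refine ⟨fun h => hs0 (by simpa using GradedMod.mem_ann.mp h), fun J r hle hr hrJ => ?_⟩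
  have ht : G.emb r • s ∈ S.deg (0 + d) := S.smul_mem (G.emb_mem r) hs
  have hspan : s ∈ Submodule.span G.A {G.emb r • s} :=
    (hS.span_singleton_eq_top ht (mt GradedMod.mem_ann.mpr hr)).symm ▸ Submodule.mem_top
  obtain ⟨a, ha⟩ := Submodule.mem_span_singleton.mp hspan
  -- only the degree-zero component `emb r'` of `a` contributes to `s = a • emb r • s`
  obtain ⟨r', hr'⟩ := G.exists_emb_eq_of_mem_deg_zero (decompose G.deg a 0).2
  have hinv : r' * r - 1 ∈ S.ann s := by
    have hs' : (decompose S.deg (a • G.emb r • s) (0 + d) : S.M) = s := by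
      rw [ha, zero_add, decompose_of_mem_same S.deg hs]
    rw [S.coe_decompose_smul_of_mem ht, sub_self, hr'] at hs'
    rw [GradedMod.mem_ann, map_sub, map_mul, map_one, sub_smul, mul_smul, hs', one_smul, sub_self]
  simpa using J.sub_mem (J.mul_mem_left r' hrJ) (hle hinv)

end Simple

namespace GWA

variable (G)

def quotientMod (I : Ideal G.A) (hI : I.IsHomogeneous G.deg) : GradedMod G where
  M := G.A ⧸ I
  deg n := (G.deg n).map I.mkQ.toAddMonoidHom
  smul_mem := by
    rintro i j a _ ha ⟨b, hb, rfl⟩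
    exact ⟨a * b, G.mul_mem ha hb, (I.mkQ.map_smul a b).symm⟩
  decomp m := by
    classical
    obtain ⟨z, rfl⟩ := I.mkQ_surjective m
    refine ⟨(decompose G.deg z).support, fun i => I.mkQ (decompose G.deg z i),
      fun i => ⟨_, (decompose G.deg z i).2, rfl⟩, ?_⟩
    rw [← map_sum, sum_support_decompose]
  indep s g hg hsum i hi := by
    choose b hb hbg using hg
    have hsumI : ∑ k ∈ s, b k ∈ I := by
      have : I.mkQ (∑ k ∈ s, b k) = 0 := by
        rw [map_sum]
        exact (Finset.sum_congr rfl fun k _ => hbg k).trans hsum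
      rwa [Submodule.mkQ_apply, Submodule.Quotient.mk_eq_zero] at this
    have := hI i hsumI
    rw [coe_decompose_sum_of_mem G.deg s hb, if_pos hi] at this
    rw [← hbg i]
    exact (Submodule.Quotient.mk_eq_zero I).mpr this

/-- `A^λ = A/Aλ`. -/
def stdMod (lam : Ideal R) : GradedMod G :=
  G.quotientMod (Ideal.span (G.emb '' lam))
    (Ideal.homogeneous_span G.deg _ fun _ ⟨l, _, h⟩ => ⟨0, h ▸ G.emb_mem l⟩)

theorem isStdMod_stdMod (lam : Ideal R) : IsStdMod G lam (G.stdMod lam) := by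
  have hmk (a : G.A) :
      a • (Submodule.Quotient.mk 1 : G.stdMod lam |>.M) = Submodule.Quotient.mk a := by
    rw [← Submodule.Quotient.mk_smul, smul_eq_mul, mul_one]
  refine ⟨Submodule.Quotient.mk 1, ⟨1, G.one_mem_deg_zero, rfl⟩, ?_, fun a => ?_⟩
  · refine eq_top_iff.mpr fun m _ => ?_
    obtain ⟨a, rfl⟩ := Submodule.Quotient.mk_surjective _ m
    exact Submodule.mem_span_singleton.mpr ⟨a, hmk a⟩
  · exact (Eq.congr_left (hmk a)).trans (Submodule.Quotient.mk_eq_zero _)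

variable {G} {S : GradedMod G} {s : S.M} {d : ℤ}

def stdModLift (hs : s ∈ S.deg d) : GHom (G.stdMod (S.ann s)) S d where
  toLin := Submodule.liftQ _ (LinearMap.toSpanSingleton G.A S.M s)
    (Submodule.span_le.mpr (by rintro _ ⟨l, hl, rfl⟩; exact hl))
  map_deg := by
    rintro i _ ⟨b, hb, rfl⟩
    exact S.smul_mem hb hs

theorem stdModLift_surjective (hs : s ∈ S.deg d) (hspan : Submodule.span G.A {s} = ⊤) :
    Function.Surjective (stdModLift hs).toLin := by
  rw [← LinearMap.range_eq_top, eq_top_iff, ← hspan, Submodule.span_le, Set.singleton_subset_iff]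
  exact ⟨Submodule.Quotient.mk 1, (Submodule.liftQ_apply _ _ _).trans (one_smul G.A s)⟩

end GWA

/-- A graded surjection `A^λ → S` of degree `i` exhibits `S` as `S^λ[-i]`, its kernel being the
maximal graded submodule of `A^λ`. -/
theorem stmt2 {R : Type} [CommRing R] [Algebra ℂ R] (hfg : Algebra.FiniteType ℂ R)
    {σ : R ≃ₐ[ℂ] R} {v : R} (G : GWA R σ v) :
    (∀ (lam : Ideal R), lam.IsMaximal → ∀ X : GradedMod G, IsStdMod G lam X →
      ∃ N : Submodule G.A X.M, (IsGradedSub X N ∧ N ≠ ⊤) ∧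
        ∀ N' : Submodule G.A X.M, IsGradedSub X N' → N' ≠ ⊤ → N' ≤ N) ∧
    (∀ S : GradedMod G, IsSimpleGr S →
      ∃ (lam : Ideal R), lam.IsMaximal ∧ ∃ X : GradedMod G, IsStdMod G lam X ∧
        ∃ (i : ℤ) (φ : GHom X S i), Function.Surjective φ.toLin) := by
  refine ⟨fun lam _ X ⟨x, hx, hspan, hann⟩ =>
    GradedMod.exists_isGradedSub_ne_top_forall_le hfg hx hspan hann, fun S hS => ?_⟩
  obtain ⟨m, hm⟩ := hS.1
  obtain ⟨d, s, hs, hs0⟩ := S.exists_mem_deg_ne_zero hm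
  exact ⟨S.ann s, hS.isMaximal_ann hs hs0, G.stdMod _, G.isStdMod_stdMod _, d,
    GWA.stdModLift hs, GWA.stdModLift_surjective hs (hS.span_singleton_eq_top hs hs0)⟩
end
end

section
/- If λ is a maximal ideal of R with v ∉ λ, then A^λ ≅ A^{σ(λ)}[1] as graded A-modules. -/
noncomputable section

variable {R : Type} [CommRing R] [Algebra ℂ R] {σ : R ≃ₐ[ℂ] R} {v : R}

variable {G : GWA R σ v}

/-!
The isomorphism sends the generator `x` of `A/Aλ` to `t₊ y`, where `y` generates `A/Aσ(λ)`.
It is well defined because `λ t₊ = t₊ σ(λ)`. It is injective because `a t₊ ∈ Aσ(λ)` gives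
`a v = a t₊ t₋ ∈ Aλ`, and `v` is invertible modulo the maximal ideal `λ`, say `r v ≡ 1`.
It is surjective because `σ(r) t₋ t₊ y = σ(r v) y = y`. Degrees are respected since every
homogeneous element of `A/Aλ` is `b x` with `b` homogeneous of the same degree.
-/

theorem mul_mem_of_mem_span_of_forall {A : Type*} [Ring A] {s : Set A} {S : Submodule A A}
    {c : A} (h : ∀ z ∈ s, z * c ∈ S) {a : A} (ha : a ∈ Submodule.span A s) : a * c ∈ S :=
  (Submodule.span_le (p := S.comap (LinearMap.toSpanSingleton A A c))).mpr h ha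

theorem exists_linearEquiv_smul_eq {A M N : Type*} [Ring A] [AddCommGroup M] [Module A M]
    [AddCommGroup N] [Module A N] {x : M} {y : N} (hx : A ∙ x = ⊤) (hy : A ∙ y = ⊤)
    (h : ∀ a : A, a • x = 0 ↔ a • y = 0) :
    ∃ e : M ≃ₗ[A] N, ∀ a : A, e (a • x) = a • y := by
  have htors : Ideal.torsionOf A M x = Ideal.torsionOf A N y := Submodule.ext h
  let e : M ≃ₗ[A] N := (LinearEquiv.ofTop _ hx).symm ≪≫ₗ
    (Ideal.quotTorsionOfEquivSpanSingleton A M x).symm ≪≫ₗ Submodule.quotEquivOfEq _ _ htors ≪≫ₗ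
    Ideal.quotTorsionOfEquivSpanSingleton A N y ≪≫ₗ LinearEquiv.ofTop _ hy
  have hex : e x = y := by
    have : (Ideal.quotTorsionOfEquivSpanSingleton A M x).symm
        ⟨x, Submodule.mem_span_singleton_self x⟩ = Submodule.Quotient.mk 1 := by
      rw [LinearEquiv.symm_apply_eq, Ideal.quotTorsionOfEquivSpanSingleton_apply_mk, one_smul]
    simp [e, LinearEquiv.ofTop_symm_apply, this]
  exact ⟨e, fun a => by rw [map_smul, hex]⟩

namespace GWA

variable (G : GWA R σ v)

def leftSpan (I : Ideal R) : Submodule G.A G.A := Submodule.span G.A (G.emb '' I)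

variable {G}

theorem emb_mem_leftSpan {I : Ideal R} {r : R} (hr : r ∈ I) : G.emb r ∈ G.leftSpan I :=
  Submodule.subset_span ⟨r, hr, rfl⟩

theorem mul_emb_mem_leftSpan {I : Ideal R} {a : G.A} (ha : a ∈ G.leftSpan I) (r : R) :
    a * G.emb r ∈ G.leftSpan I :=
  mul_mem_of_mem_span_of_forall
    (by rintro _ ⟨m, hm, rfl⟩; rw [← map_mul]; exact emb_mem_leftSpan (I.mul_mem_right r hm)) ha

theorem mul_tp_mem_leftSpan_map {I : Ideal R} {a : G.A} (ha : a ∈ G.leftSpan I) :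
    a * G.tp ∈ G.leftSpan (I.map σ.toAlgHom.toRingHom) :=
  mul_mem_of_mem_span_of_forall (by
    rintro _ ⟨m, hm, rfl⟩
    rw [G.rel1, ← smul_eq_mul]
    exact Submodule.smul_mem _ _ (emb_mem_leftSpan (Ideal.mem_map_of_mem _ hm))) ha

theorem mul_tm_mem_leftSpan {I : Ideal R} {a : G.A}
    (ha : a ∈ G.leftSpan (I.map σ.toAlgHom.toRingHom)) : a * G.tm ∈ G.leftSpan I :=
  mul_mem_of_mem_span_of_forall (by
    rintro _ ⟨_, hσm, rfl⟩
    obtain ⟨m, hm, rfl⟩ := (Ideal.mem_map_iff_of_surjective _ σ.surjective).mp hσm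
    rw [G.rel2, ← smul_eq_mul]
    exact Submodule.smul_mem _ _ (emb_mem_leftSpan hm)) ha

theorem mul_tp_mem_leftSpan_map_iff {I : Ideal R} {r : R} (hr : r * v - 1 ∈ I) (a : G.A) :
    a * G.tp ∈ G.leftSpan (I.map σ.toAlgHom.toRingHom) ↔ a ∈ G.leftSpan I := by
  refine ⟨fun ha => ?_, mul_tp_mem_leftSpan_map⟩
  have hav : a * G.emb v ∈ G.leftSpan I := by
    simpa [mul_assoc, G.rel4] using mul_tm_mem_leftSpan ha
  have hdiff : a * G.emb (r * v - 1) ∈ G.leftSpan I := by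
    rw [← smul_eq_mul]; exact Submodule.smul_mem _ _ (emb_mem_leftSpan hr)
  have : a = a * G.emb v * G.emb r - a * G.emb (r * v - 1) := by
    rw [mul_assoc, ← map_mul, ← mul_sub, ← map_sub, mul_comm v r, sub_sub_cancel, map_one, mul_one]
  rw [this]
  exact sub_mem (mul_emb_mem_leftSpan hav r) hdiff

theorem emb_mul_tm_mul_tp_sub_one_mem {I : Ideal R} {r : R} (hr : r * v - 1 ∈ I) :
    G.emb (σ r) * G.tm * G.tp - 1 ∈ G.leftSpan (I.map σ.toAlgHom.toRingHom) := by
  rw [mul_assoc, G.rel3, ← map_mul, ← map_one G.emb, ← map_sub, ← map_one σ, ← map_mul,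
    ← map_sub]
  exact emb_mem_leftSpan (Ideal.mem_map_of_mem _ hr)

theorem span_tp_smul_eq_top {M : Type*} [AddCommGroup M] [Module G.A M] {I : Ideal R} {r : R}
    (hr : r * v - 1 ∈ I) {y : M} (hy : G.A ∙ y = ⊤)
    (hann : ∀ a ∈ G.leftSpan (I.map σ.toAlgHom.toRingHom), a • y = 0) :
    G.A ∙ (G.tp • y) = ⊤ := by
  refine eq_top_iff.mpr (hy ▸ (Submodule.span_singleton_le_iff_mem _ _).mpr ?_)
  have hy : (G.emb (σ r) * G.tm * G.tp - 1) • y = 0 := hann _ (emb_mul_tm_mul_tp_sub_one_mem hr)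
  rw [sub_smul, one_smul, sub_eq_zero, mul_smul] at hy
  have hmem : (G.emb (σ r) * G.tm) • G.tp • y ∈ G.A ∙ (G.tp • y) :=
    Submodule.smul_mem _ _ (Submodule.mem_span_singleton_self _)
  rwa [hy] at hmem

theorem exists_sum_eq_of_mem (a : G.A) (i : ℤ) :
    ∃ (s : Finset ℤ) (g : ℤ → G.A), i ∈ s ∧ (∀ j, g j ∈ G.deg j) ∧ a = ∑ j ∈ s, g j := by
  obtain ⟨s, g, hg, rfl⟩ := G.decomp a
  by_cases hi : i ∈ s
  · exact ⟨s, g, hi, hg, rfl⟩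
  refine ⟨insert i s, Function.update g i 0, s.mem_insert_self i, fun j => ?_, ?_⟩
  · rcases eq_or_ne j i with rfl | hj
    · simp
    · simpa [hj] using hg j
  · rw [Finset.sum_insert hi, Function.update_self, zero_add]
    exact Finset.sum_congr rfl fun j hj =>
      (Function.update_of_ne (ne_of_mem_of_not_mem hj hi) _ _).symm

end GWA

namespace GradedMod

variable {X : GradedMod G}

theorem eq_of_sum_eq {s : Finset ℤ} {g : ℤ → X.M} (hg : ∀ j, g j ∈ X.deg j) {i : ℤ} (hi : i ∈ s)
    {m : X.M} (hm : m ∈ X.deg i) (hsum : ∑ j ∈ s, g j = m) : g i = m := by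
  classical
  have hmem (j : ℤ) : g j - (if j = i then m else 0) ∈ X.deg j := by
    split_ifs with hj
    · subst hj; exact sub_mem (hg j) hm
    · simpa using hg j
  have hzero : ∑ j ∈ s, (g j - if j = i then m else 0) = 0 := by
    rw [Finset.sum_sub_distrib, Finset.sum_ite_eq' s i, if_pos hi, hsum, sub_self]
  simpa [sub_eq_zero] using X.indep s _ hmem hzero i hi

theorem exists_mem_deg_smul_eq {x : X.M} (hx : x ∈ X.deg 0) {i : ℤ} {m : X.M}
    (hm : m ∈ X.deg i) (a : G.A) (ha : a • x = m) : ∃ b ∈ G.deg i, b • x = m := by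
  obtain ⟨s, g, hi, hg, rfl⟩ := G.exists_sum_eq_of_mem a i
  refine ⟨g i, hg i, eq_of_sum_eq (fun j => ?_) hi hm (by rw [← ha, Finset.sum_smul])⟩
  simpa using X.smul_mem (hg j) hx

end GradedMod

def GHom.ofGenerator {X Y : GradedMod G} {n : ℤ} (f : X.M →ₗ[G.A] Y.M) {x : X.M}
    (hx0 : x ∈ X.deg 0) (hx : G.A ∙ x = ⊤) (hfx : f x ∈ Y.deg n) : GHom X Y n where
  toLin := f
  map_deg i m hm := by
    obtain ⟨a, rfl⟩ := Submodule.mem_span_singleton.mp (hx ▸ Submodule.mem_top : m ∈ G.A ∙ x)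
    obtain ⟨b, hb, hbx⟩ := GradedMod.exists_mem_deg_smul_eq hx0 hm a rfl
    rw [← hbx, map_smul]
    exact Y.smul_mem hb hfx

theorem stmt3_general {R : Type} [CommRing R] [Algebra ℂ R]
    {σ : R ≃ₐ[ℂ] R} {v : R} (G : GWA R σ v)
    (lam : Ideal R) (hlam : lam.IsMaximal) (hv : v ∉ lam)
    (X Y : GradedMod G) (hX : IsStdMod G lam X)
    (hY : IsStdMod G (Ideal.map σ.toAlgHom.toRingHom lam) Y) :
    GIso X Y 1 := by
  obtain ⟨x, hx0, hxgen, hxann⟩ := hX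
  obtain ⟨y, hy0, hygen, hyann⟩ := hY
  obtain ⟨r, l, hl, hrl⟩ := hlam.exists_inv hv
  have hr : r * v - 1 ∈ lam := by rw [← hrl, sub_add_cancel_left]; exact neg_mem hl
  have hann (a : G.A) : a • x = 0 ↔ a • G.tp • y = 0 := by
    rw [hxann, ← mul_smul, hyann]
    exact (G.mul_tp_mem_leftSpan_map_iff hr a).symm
  have hgen : G.A ∙ (G.tp • y) = ⊤ :=
    G.span_tp_smul_eq_top hr hygen fun a ha => (hyann a).mpr ha
  obtain ⟨e, he⟩ := exists_linearEquiv_smul_eq hxgen hgen hann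
  have hex : e x ∈ Y.deg 1 := by
    rw [← one_smul G.A x, he, one_smul]
    simpa only [add_zero] using Y.smul_mem G.tp_mem hy0
  exact ⟨GHom.ofGenerator e.toLinearMap hx0 hxgen hex, e.bijective⟩

/-- If `v ∉ λ` then `A^λ ≅ A^{σ(λ)}[1]` as graded `A`-modules. -/
theorem stmt3 {R : Type} [CommRing R] [Algebra ℂ R] (hfg : Algebra.FiniteType ℂ R)
    {σ : R ≃ₐ[ℂ] R} {v : R} (G : GWA R σ v)
    (lam : Ideal R) (hlam : lam.IsMaximal) (hv : v ∉ lam)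
    (X Y : GradedMod G) (hX : IsStdMod G lam X)
    (hY : IsStdMod G (Ideal.map σ.toAlgHom.toRingHom lam) Y) :
    GIso X Y 1 :=
  stmt3_general G lam hlam hv X Y hX hY
end
end

section
/- For every simple graded A-module S, the graded dual S* is isomorphic to S as a graded A-module. -/
noncomputable section

variable {R : Type} [CommRing R] [Algebra ℂ R] {σ : R ≃ₐ[ℂ] R} {v : R}

variable {G : GWA R σ v}

/-!
Let `S` be a simple graded module. A nonzero homogeneous vector generates `S`, so each nonzero
component `Sₙ` is a cyclic `R`-module with maximal annihilator, hence a line by Zariski's lemma.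
Choose spanning vectors `vₙ` and write `t₊ vₙ = cₙ vₙ₊₁`, `t₋ vₙ₊₁ = dₙ vₙ`; simplicity forces
`cₙ = 0 ↔ dₙ = 0`, so there are nowhere vanishing weights with `xₙ₊₁ cₙ = xₙ dₙ`. The diagonal
pairing `Σₙ xₙ εₙ(m) εₙ(m')` in the coordinates `εₙ` along `vₙ` is then contravariant for `R`,
`t₊` and `t₋`, hence for all of `A`, and it is perfect on each component.
-/

open DirectSum

theorem DirectSum.isInternal_of_exists_sum_of_sum_eq_zero_s7 {ι M : Type*} [DecidableEq ι]
    [AddCommGroup M] (𝓜 : ι → AddSubgroup M)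
    (decomp : ∀ m : M, ∃ (s : Finset ι) (g : ι → M), (∀ i, g i ∈ 𝓜 i) ∧ m = ∑ i ∈ s, g i)
    (indep : ∀ (s : Finset ι) (g : ι → M), (∀ i, g i ∈ 𝓜 i) → (∑ i ∈ s, g i) = 0 →
      ∀ i ∈ s, g i = 0) :
    DirectSum.IsInternal 𝓜 := by
  classical
  refine ⟨(injective_iff_map_eq_zero _).2 fun f hf => ?_, fun m => ?_⟩
  · rw [← sum_support_of f, map_sum] at hf
    simp only [coeAddMonoidHom_of] at hf
    ext i
    by_cases hi : i ∈ f.support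
    · simpa using indep _ (fun i => (f i : M)) (fun i => (f i).2) hf i hi
    · simpa using hi
  · obtain ⟨s, g, hg, rfl⟩ := decomp m
    exact ⟨∑ i ∈ s, of (fun i => 𝓜 i) i ⟨g i, hg i⟩, by simp [map_sum]⟩

theorem exists_forall_succ_eq_mul {K : Type*} [CommGroup K] (r : ℤ → K) :
    ∃ x : ℤ → K, ∀ n, x (n + 1) = x n * r n := by
  let f : ℕ → K := fun k => ∏ i ∈ Finset.range k, r i
  let g : ℕ → K := fun k => (∏ i ∈ Finset.range k, r (-(i + 1)))⁻¹
  refine ⟨fun n => if 0 ≤ n then f n.toNat else g (-n).toNat, fun n => ?_⟩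
  dsimp only
  rcases lt_trichotomy n (-1) with hn | rfl | hn
  · rw [if_neg (by omega), if_neg (by omega), show (-n).toNat = (-(n + 1)).toNat + 1 by omega]
    simp only [g, Finset.prod_range_succ, mul_inv_rev]
    rw [show -(((-(n + 1)).toNat : ℤ) + 1) = n by omega, mul_comm, mul_inv_cancel_left]
  · simp [f, g]
  · rw [if_pos (by omega), if_pos (by omega), show (n + 1).toNat = n.toNat + 1 by omega]
    simp only [f, Finset.prod_range_succ]
    rw [show (n.toNat : ℤ) = n by omega]

theorem exists_forall_ne_zero_mul_eq {K : Type*} [Field K] (c d : ℤ → K)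
    (h : ∀ n, c n = 0 ↔ d n = 0) :
    ∃ x : ℤ → K, (∀ n, x n ≠ 0) ∧ ∀ n, x (n + 1) * c n = x n * d n := by
  classical
  let r : ℤ → Kˣ := fun n => if hc : c n = 0 then 1 else
    Units.mk0 (d n / c n) (div_ne_zero (mt (h n).2 hc) hc)
  obtain ⟨x, hx⟩ := exists_forall_succ_eq_mul r
  refine ⟨fun n => x n, fun n => (x n).ne_zero, fun n => ?_⟩
  change (x (n + 1) : K) * c n = x n * d n
  rw [hx n, Units.val_mul]
  by_cases hc : c n = 0
  · rw [hc, (h n).1 hc, mul_zero, mul_zero]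
  · simp only [r, dif_neg hc, Units.val_mk0]
    field_simp

theorem algebraMap_quotient_surjective_of_isMaximal {k A : Type*} [Field k] [IsAlgClosed k]
    [CommRing A] [Algebra k A] [Algebra.FiniteType k A] (I : Ideal A) [I.IsMaximal] :
    Function.Surjective (algebraMap k (A ⧸ I)) := by
  let := Ideal.Quotient.field I
  have := finite_of_finite_type_of_isJacobsonRing k (A ⧸ I)
  exact IsAlgClosed.algebraMap_bijective_of_isIntegral.2

namespace GWA

variable (G)

instance : Decomposition G.deg :=
  (isInternal_of_exists_sum_of_sum_eq_zero_s7 G.deg G.decomp G.indep).chooseDecomposition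

@[elab_as_elim]
theorem induction_on {motive : G.A → Prop} (emb : ∀ r, motive (G.emb r))
    (tp : motive G.tp) (tm : motive G.tm)
    (add : ∀ a b, motive a → motive b → motive (a + b))
    (mul : ∀ a b, motive a → motive b → motive (a * b)) (a : G.A) : motive a := by
  have pow : ∀ {t : G.A}, motive t → ∀ k : ℕ, motive (t ^ k) := fun ht k => by
    induction k with
    | zero => simpa using emb 1
    | succ k ih => rw [pow_succ]; exact mul _ _ ih ht
  induction a using Decomposition.inductionOn G.deg with
  | zero => simpa using emb 0
  | add a b ha hb => exact add a b ha hb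
  | @homogeneous i a =>
    obtain ⟨k, rfl | rfl⟩ := i.eq_nat_or_neg
    · obtain ⟨r, hr, -⟩ := G.free_pos k a a.2
      exact hr ▸ mul _ _ (emb r) (pow tp k)
    · obtain ⟨r, hr, -⟩ := G.free_neg k a a.2
      exact hr ▸ mul _ _ (emb r) (pow tm k)

theorem exists_eq_emb_mul_tp {a : G.A} (ha : a ∈ G.deg 1) : ∃ r, a = G.emb r * G.tp := by
  obtain ⟨r, hr, -⟩ := G.free_pos 1 a (by exact_mod_cast ha)
  exact ⟨r, by simpa using hr⟩

theorem exists_eq_emb_mul_tm {a : G.A} (ha : a ∈ G.deg (-1)) : ∃ r, a = G.emb r * G.tm := by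
  obtain ⟨r, hr, -⟩ := G.free_neg 1 a (by exact_mod_cast ha)
  exact ⟨r, by simpa using hr⟩

theorem exists_eq_emb {a : G.A} (ha : a ∈ G.deg 0) : ∃ r, a = G.emb r := by
  obtain ⟨r, hr, -⟩ := G.free_pos 0 a (by exact_mod_cast ha)
  exact ⟨r, by simpa using hr⟩

end GWA

namespace GradedMod

variable (S : GradedMod G)

instance : Decomposition S.deg :=
  (isInternal_of_exists_sum_of_sum_eq_zero_s7 S.deg S.decomp S.indep).chooseDecomposition

theorem smul_mem_deg {a : G.A} {i j k : ℤ} (ha : a ∈ G.deg i) {m : S.M} (hm : m ∈ S.deg j)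
    (hk : i + j = k) : a • m ∈ S.deg k :=
  hk ▸ S.smul_mem ha hm

theorem decompose_smul_of_mem_left {a : G.A} {k : ℤ} (ha : a ∈ G.deg k) (m : S.M) (n : ℤ) :
    (decompose S.deg (a • m) n : S.M) = a • (decompose S.deg m (n - k) : S.M) := by
  induction m using Decomposition.inductionOn S.deg with
  | zero => simp
  | add m m' hm hm' => simp [smul_add, hm, hm']
  | @homogeneous j m =>
    have ham := S.smul_mem ha m.2
    by_cases hn : n = k + j
    · rw [hn, decompose_of_mem_same _ ham, add_sub_cancel_left, decompose_coe, of_eq_same]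
    · rw [decompose_of_mem_ne _ ham (Ne.symm hn), decompose_of_mem_ne _ m.2 (by omega),
        smul_zero]

theorem decompose_smul_of_mem_right (a : G.A) {m : S.M} {j : ℤ} (hm : m ∈ S.deg j) (n : ℤ) :
    (decompose S.deg (a • m) n : S.M) = (decompose G.deg a (n - j) : G.A) • m := by
  induction a using Decomposition.inductionOn G.deg with
  | zero => simp
  | add a a' ha ha' => simp [add_smul, ha, ha']
  | @homogeneous i a =>
    have ham := S.smul_mem a.2 hm
    by_cases hn : n = i + j
    · rw [hn, decompose_of_mem_same _ ham, add_sub_cancel_right, decompose_coe, of_eq_same]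
    · rw [decompose_of_mem_ne _ ham (Ne.symm hn), decompose_of_mem_ne _ a.2 (by omega),
        zero_smul]

theorem isGradedSub_of_decompose_mem {N : Submodule G.A S.M}
    (hN : ∀ m ∈ N, ∀ n, (decompose S.deg m n : S.M) ∈ N) : IsGradedSub S N := by
  classical
  exact fun m hm => ⟨_, fun n => decompose S.deg m n, fun n => (decompose S.deg m n).2,
    fun n => hN m hm n, (sum_support_decompose S.deg m).symm⟩

theorem isGradedSub_span_singleton_s7 {m : S.M} {k : ℤ} (hm : m ∈ S.deg k) :
    IsGradedSub S (Submodule.span G.A {m}) := by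
  refine S.isGradedSub_of_decompose_mem fun x hx n => ?_
  obtain ⟨a, rfl⟩ := Submodule.mem_span_singleton.1 hx
  rw [S.decompose_smul_of_mem_right a hm]
  exact Submodule.smul_mem _ _ (Submodule.mem_span_singleton_self m)

def embAnnihilator (m : S.M) : Ideal R where
  carrier := {r | G.emb r • m = 0}
  zero_mem' := by simp
  add_mem' {a b} ha hb := by simp_all [add_smul]
  smul_mem' c r hr := by simp_all [mul_smul]

variable {S} in
theorem mem_embAnnihilator {m : S.M} {r : R} : r ∈ S.embAnnihilator m ↔ G.emb r • m = 0 :=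
  Iff.rfl

end GradedMod

namespace IsSimpleGr

open GradedMod

variable {S : GradedMod G} (hS : IsSimpleGr S)
include hS

theorem span_singleton_eq_top_s7 {m : S.M} {k : ℤ} (hm : m ∈ S.deg k) (hm0 : m ≠ 0) :
    Submodule.span G.A {m} = ⊤ :=
  (hS.2 _ (S.isGradedSub_span_singleton_s7 hm)).resolve_left fun h =>
    hm0 (by simpa [h] using Submodule.mem_span_singleton_self (R := G.A) m)

theorem exists_mem_deg_smul_eq {m x : S.M} {j k : ℤ} (hm : m ∈ S.deg j) (hm0 : m ≠ 0)
    (hx : x ∈ S.deg k) : ∃ a ∈ G.deg (k - j), x = a • m := by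
  obtain ⟨b, rfl⟩ := Submodule.mem_span_singleton.1
    (hS.span_singleton_eq_top_s7 hm hm0 ▸ Submodule.mem_top : x ∈ Submodule.span G.A {m})
  exact ⟨_, (decompose G.deg b (k - j)).2,
    by rw [← S.decompose_smul_of_mem_right b hm, decompose_of_mem_same _ hx]⟩

theorem exists_emb_smul_eq {m x : S.M} {k : ℤ} (hm : m ∈ S.deg k) (hm0 : m ≠ 0)
    (hx : x ∈ S.deg k) : ∃ r, x = G.emb r • m := by
  obtain ⟨a, ha, rfl⟩ := hS.exists_mem_deg_smul_eq hm hm0 hx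
  obtain ⟨r, rfl⟩ := G.exists_eq_emb (by simpa using ha)
  exact ⟨r, rfl⟩

theorem tp_smul_ne_zero {m x : S.M} {n : ℤ} (hm : m ∈ S.deg n) (hm0 : m ≠ 0)
    (hx : x ∈ S.deg (n + 1)) (hx0 : x ≠ 0) : G.tp • m ≠ 0 := fun h => by
  obtain ⟨a, ha, rfl⟩ := hS.exists_mem_deg_smul_eq hm hm0 hx
  obtain ⟨r, rfl⟩ := G.exists_eq_emb_mul_tp (by simpa using ha)
  exact hx0 (by rw [mul_smul, h, smul_zero])

theorem tm_smul_ne_zero {m x : S.M} {n : ℤ} (hm : m ∈ S.deg (n + 1)) (hm0 : m ≠ 0)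
    (hx : x ∈ S.deg n) (hx0 : x ≠ 0) : G.tm • m ≠ 0 := fun h => by
  obtain ⟨a, ha, rfl⟩ := hS.exists_mem_deg_smul_eq hm hm0 hx
  obtain ⟨r, rfl⟩ := G.exists_eq_emb_mul_tm (by simpa using ha)
  exact hx0 (by rw [mul_smul, h, smul_zero])

theorem isMaximal_embAnnihilator {m : S.M} {k : ℤ} (hm : m ∈ S.deg k) (hm0 : m ≠ 0) :
    (S.embAnnihilator m).IsMaximal := by
  refine Ideal.isMaximal_iff.2 ⟨by simpa [mem_embAnnihilator] using hm0, fun J r hJ hr hrJ => ?_⟩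
  have hrm : G.emb r • m ∈ S.deg k := S.smul_mem_deg (G.emb_mem r) hm (zero_add k)
  -- `m` lies in the cyclic `R`-module generated by `r • m`, so `1 - r' r` kills `m`.
  obtain ⟨r', hr'⟩ := hS.exists_emb_smul_eq hrm hr hm
  have h1 : 1 - r' * r ∈ S.embAnnihilator m := by
    rw [mem_embAnnihilator, map_sub, map_one, map_mul, sub_smul, one_smul, mul_smul, ← hr',
      sub_self]
  simpa using J.add_mem (hJ h1) (J.mul_mem_left r' hrJ)

theorem exists_smul_eq [Algebra.FiniteType ℂ R] [Module ℂ S.M] [IsScalarTower ℂ G.A S.M]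
    {m x : S.M} {k : ℤ} (hm : m ∈ S.deg k) (hm0 : m ≠ 0) (hx : x ∈ S.deg k) :
    ∃ c : ℂ, x = c • m := by
  obtain ⟨r, rfl⟩ := hS.exists_emb_smul_eq hm hm0 hx
  have := hS.isMaximal_embAnnihilator hm hm0
  obtain ⟨c, hc⟩ := algebraMap_quotient_surjective_of_isMaximal (k := ℂ) (S.embAnnihilator m)
    (Ideal.Quotient.mk _ r)
  have hrc : G.emb (r - algebraMap ℂ R c) • m = 0 := by
    rw [← mem_embAnnihilator, ← Ideal.Quotient.eq_zero_iff_mem, map_sub, ← hc,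
      Ideal.Quotient.mk_algebraMap, sub_self]
  refine ⟨c, ?_⟩
  rwa [map_sub, sub_smul, AlgHom.commutes, algebraMap_smul, sub_eq_zero] at hrc

end IsSimpleGr

namespace GradedMod

variable (S : GradedMod G) [Module ℂ S.M]

theorem decompose_complex_smul [IsScalarTower ℂ G.A S.M] (c : ℂ) (m : S.M) (n : ℤ) :
    (decompose S.deg (c • m) n : S.M) = c • (decompose S.deg m n : S.M) := by
  rw [← algebraMap_smul G.A c m, S.decompose_smul_of_mem_left (G.algmap_mem c), sub_zero,
    algebraMap_smul]

structure LineBasis where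
  vec : ℤ → S.M
  vec_mem : ∀ n, vec n ∈ S.deg n
  exists_eq_smul : ∀ n, ∀ m ∈ S.deg n, ∃ c : ℂ, m = c • vec n

namespace LineBasis

variable {S} (b : S.LineBasis)

open Classical in
def coord (n : ℤ) (m : S.M) : ℂ :=
  if b.vec n ≠ 0 then (b.exists_eq_smul n _ (decompose S.deg m n).2).choose else 0

theorem decompose_eq_coord_smul (m : S.M) (n : ℤ) :
    (decompose S.deg m n : S.M) = b.coord n m • b.vec n := by
  obtain ⟨c, hc⟩ := b.exists_eq_smul n _ (decompose S.deg m n).2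
  by_cases h : b.vec n = 0
  · rw [hc, h, smul_zero, smul_zero]
  · rw [coord, if_pos h]
    exact (b.exists_eq_smul n _ (decompose S.deg m n).2).choose_spec

theorem coord_of_vec_eq_zero {n : ℤ} (h : b.vec n = 0) (m : S.M) : b.coord n m = 0 :=
  if_neg (not_not.2 h)

theorem coord_eq_of_decompose_eq {m : S.M} {n : ℤ} {c : ℂ}
    (hm : (decompose S.deg m n : S.M) = c • b.vec n) (hc : b.vec n = 0 → c = 0) :
    b.coord n m = c := by
  by_cases h : b.vec n = 0
  · rw [b.coord_of_vec_eq_zero h m, hc h]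
  · exact smul_left_injective ℂ h (by simp only [← b.decompose_eq_coord_smul, hm])

theorem coord_of_mem {m : S.M} {n : ℤ} (hm : m ∈ S.deg n) : m = b.coord n m • b.vec n := by
  rw [← b.decompose_eq_coord_smul, decompose_of_mem_same _ hm]

theorem coord_of_mem_of_ne {m : S.M} {i n : ℤ} (hm : m ∈ S.deg i) (hn : i ≠ n) :
    b.coord n m = 0 :=
  b.coord_eq_of_decompose_eq (by rw [decompose_of_mem_ne _ hm hn, zero_smul]) fun _ => rfl

theorem coord_eq_zero_iff_of_mem {m : S.M} {n : ℤ} (hm : m ∈ S.deg n) :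
    b.coord n m = 0 ↔ m = 0 := by
  refine ⟨fun h => by rw [b.coord_of_mem hm, h, zero_smul], ?_⟩
  rintro rfl
  exact b.coord_eq_of_decompose_eq (by simp) fun _ => rfl

theorem coord_vec {n : ℤ} (h : b.vec n ≠ 0) : b.coord n (b.vec n) = 1 :=
  b.coord_eq_of_decompose_eq (by rw [decompose_of_mem_same _ (b.vec_mem n), one_smul])
    fun h' => absurd h' h

theorem coord_add (n : ℤ) (m m' : S.M) : b.coord n (m + m') = b.coord n m + b.coord n m' :=
  b.coord_eq_of_decompose_eq (by
    rw [decompose_add, DirectSum.add_apply, AddMemClass.coe_add, b.decompose_eq_coord_smul,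
      b.decompose_eq_coord_smul, add_smul])
    fun h => by rw [b.coord_of_vec_eq_zero h, b.coord_of_vec_eq_zero h, add_zero]

theorem finite_support_coord (m : S.M) : {n | b.coord n m ≠ 0}.Finite := by
  classical
  refine (decompose S.deg m).support.finite_toSet.subset fun n hn => ?_
  by_contra h
  exact hn (b.coord_eq_of_decompose_eq (by simpa using h) fun _ => rfl)

variable (x : ℤ → ℂ)

def pairing (m m' : S.M) : ℂ := ∑ᶠ n, x n * b.coord n m * b.coord n m'

theorem finite_support_pairing (m m' : S.M) :
    (Function.support fun n => x n * b.coord n m * b.coord n m').Finite :=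
  (b.finite_support_coord m).subset fun n hn h => hn (by simp [h])

theorem pairing_of_mem_left {m : S.M} {i : ℤ} (hm : m ∈ S.deg i) (m' : S.M) :
    b.pairing x m m' = x i * b.coord i m * b.coord i m' :=
  finsum_eq_single _ i fun n hn => by rw [b.coord_of_mem_of_ne hm (Ne.symm hn), mul_zero, zero_mul]

theorem pairing_eq_zero_of_ne {m m' : S.M} {i j : ℤ} (hij : i ≠ j) (hm : m ∈ S.deg i)
    (hm' : m' ∈ S.deg j) : b.pairing x m m' = 0 := by
  rw [b.pairing_of_mem_left x hm, b.coord_of_mem_of_ne hm' (Ne.symm hij), mul_zero]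

theorem pairing_comm (m m' : S.M) : b.pairing x m m' = b.pairing x m' m :=
  finsum_congr fun n => by ring

theorem pairing_vec_ne_zero (hx : ∀ n, x n ≠ 0) {m : S.M} {n : ℤ}
    (hm : m ∈ S.deg n) (hm0 : m ≠ 0) : b.pairing x m (b.vec n) ≠ 0 := by
  have hc : b.coord n m ≠ 0 := (b.coord_eq_zero_iff_of_mem hm).not.2 hm0
  have hv : b.vec n ≠ 0 := fun h => hm0 (by rw [b.coord_of_mem hm, h, smul_zero])
  rw [b.pairing_of_mem_left x hm, b.coord_vec hv, mul_one]
  exact mul_ne_zero (hx n) hc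

theorem pairing_add_left (m₁ m₂ m' : S.M) :
    b.pairing x (m₁ + m₂) m' = b.pairing x m₁ m' + b.pairing x m₂ m' := by
  simp only [pairing, b.coord_add, add_mul, mul_add]
  exact finsum_add_distrib (b.finite_support_pairing x m₁ m') (b.finite_support_pairing x m₂ m')

theorem pairing_add_right (m m₁ m₂ : S.M) :
    b.pairing x m (m₁ + m₂) = b.pairing x m m₁ + b.pairing x m m₂ := by
  rw [pairing_comm, pairing_add_left, pairing_comm, pairing_comm b x m₂]

variable [IsScalarTower ℂ G.A S.M]

theorem coord_smul (n : ℤ) (c : ℂ) (m : S.M) : b.coord n (c • m) = c * b.coord n m :=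
  b.coord_eq_of_decompose_eq (by
    rw [S.decompose_complex_smul, b.decompose_eq_coord_smul, smul_smul])
    fun h => by rw [b.coord_of_vec_eq_zero h, mul_zero]

theorem coord_smul_of_mem {a : G.A} {k : ℤ} (ha : a ∈ G.deg k) (m : S.M) (n : ℤ) :
    b.coord n (a • m) = b.coord n (a • b.vec (n - k)) * b.coord (n - k) m := by
  have hav : a • b.vec (n - k) ∈ S.deg n := S.smul_mem_deg ha (b.vec_mem _) (by ring)
  refine b.coord_eq_of_decompose_eq ?_ fun h => by rw [b.coord_of_vec_eq_zero h, zero_mul]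
  rw [S.decompose_smul_of_mem_left ha, b.decompose_eq_coord_smul, smul_comm, mul_comm,
    ← smul_smul, ← b.coord_of_mem hav]

theorem pairing_smul_left (c : ℂ) (m m' : S.M) :
    b.pairing x (c • m) m' = c * b.pairing x m m' := by
  simp only [pairing, b.coord_smul, mul_finsum]
  exact finsum_congr fun n => by ring

def pairingₗ : S.M →ₗ[ℂ] S.M →ₗ[ℂ] ℂ :=
  LinearMap.mk₂ ℂ (b.pairing x) (b.pairing_add_left x) (b.pairing_smul_left x)
    (b.pairing_add_right x) fun c m m' => by
      rw [pairing_comm, pairing_smul_left, pairing_comm, smul_eq_mul]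

theorem pairingₗ_apply (m m' : S.M) : b.pairingₗ x m m' = b.pairing x m m' := rfl

theorem pairing_smul_right_of_mem {a a' : G.A} {k : ℤ} (ha : a ∈ G.deg k) (ha' : a' ∈ G.deg (-k))
    (hx : ∀ n, x (n + k) * b.coord (n + k) (a • b.vec n) =
      x n * b.coord n (a' • b.vec (n + k)))
    (m m' : S.M) : b.pairing x m (a • m') = b.pairing x (a' • m) m' := by
  rw [pairing, pairing, ← finsum_comp_equiv (Equiv.addRight k)]
  refine finsum_congr fun n => ?_
  rw [Equiv.coe_addRight, b.coord_smul_of_mem ha, b.coord_smul_of_mem ha', add_sub_cancel_right,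
    sub_neg_eq_add]
  linear_combination b.coord (n + k) m * b.coord n m' * hx n

theorem pairing_smul_right_eq (iot : G.A →+* (G.A)ᵐᵒᵖ)
    (hR : ∀ r : R, iot (G.emb r) = MulOpposite.op (G.emb r))
    (htp : iot G.tp = MulOpposite.op G.tm) (htm : iot G.tm = MulOpposite.op G.tp)
    (hx : ∀ n, x (n + 1) * b.coord (n + 1) (G.tp • b.vec n) =
      x n * b.coord n (G.tm • b.vec (n + 1)))
    (a : G.A) (m m' : S.M) : b.pairing x m (a • m') = b.pairing x ((iot a).unop • m) m' := by
  induction a using G.induction_on generalizing m m' with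
  | emb r =>
    rw [hR, MulOpposite.unop_op]
    exact b.pairing_smul_right_of_mem x (G.emb_mem r) (by simpa using G.emb_mem r)
      (fun n => by rw [add_zero]) m m'
  | tp =>
    rw [htp, MulOpposite.unop_op]
    exact b.pairing_smul_right_of_mem x G.tp_mem G.tm_mem hx m m'
  | tm =>
    rw [htm, MulOpposite.unop_op]
    refine b.pairing_smul_right_of_mem x G.tm_mem (by simpa using G.tp_mem) (fun n => ?_) m m'
    simpa [← sub_eq_add_neg] using (hx (n - 1)).symm
  | add a a' ha ha' =>
    rw [add_smul, pairing_add_right, ha, ha', map_add, MulOpposite.unop_add, add_smul,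
      pairing_add_left]
  | mul a a' ha ha' =>
    rw [mul_smul, ha, ha', map_mul, MulOpposite.unop_mul, mul_smul]

end LineBasis

end GradedMod

namespace IsSimpleGr

open GradedMod

variable {S : GradedMod G} (hS : IsSimpleGr S)
include hS

theorem nonempty_lineBasis [Algebra.FiniteType ℂ R] [Module ℂ S.M] [IsScalarTower ℂ G.A S.M] :
    Nonempty S.LineBasis := by
  have (n : ℤ) : ∃ e ∈ S.deg n, ∀ m ∈ S.deg n, ∃ c : ℂ, m = c • e := by
    by_cases h : ∃ e ∈ S.deg n, e ≠ 0
    · obtain ⟨e, he, he0⟩ := h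
      exact ⟨e, he, fun m hm => hS.exists_smul_eq he he0 hm⟩
    · push Not at h
      exact ⟨0, zero_mem _, fun m hm => ⟨0, by rw [h m hm, zero_smul]⟩⟩
  choose e he hspan using this
  exact ⟨⟨e, he, hspan⟩⟩

variable [Module ℂ S.M] (b : S.LineBasis)

theorem tp_smul_vec_eq_zero_iff {n : ℤ} :
    G.tp • b.vec n = 0 ↔ b.vec n = 0 ∨ b.vec (n + 1) = 0 := by
  refine ⟨fun h => ?_, ?_⟩
  · by_contra! hne
    exact hS.tp_smul_ne_zero (b.vec_mem n) hne.1 (b.vec_mem (n + 1)) hne.2 h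
  · rintro (h | h)
    · rw [h, smul_zero]
    · rw [b.coord_of_mem (S.smul_mem_deg G.tp_mem (b.vec_mem n) (add_comm 1 n)), h, smul_zero]

theorem tm_smul_vec_eq_zero_iff {n : ℤ} :
    G.tm • b.vec (n + 1) = 0 ↔ b.vec n = 0 ∨ b.vec (n + 1) = 0 := by
  refine ⟨fun h => ?_, ?_⟩
  · by_contra! hne
    exact hS.tm_smul_ne_zero (b.vec_mem (n + 1)) hne.2 (b.vec_mem n) hne.1 h
  · rintro (h | h)
    · rw [b.coord_of_mem (S.smul_mem_deg G.tm_mem (b.vec_mem (n + 1)) (by ring)), h, smul_zero]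
    · rw [h, smul_zero]

theorem coord_tp_smul_vec_eq_zero_iff (n : ℤ) :
    b.coord (n + 1) (G.tp • b.vec n) = 0 ↔ b.coord n (G.tm • b.vec (n + 1)) = 0 := by
  rw [b.coord_eq_zero_iff_of_mem (S.smul_mem_deg G.tp_mem (b.vec_mem n) (add_comm 1 n)),
    b.coord_eq_zero_iff_of_mem (S.smul_mem_deg G.tm_mem (b.vec_mem (n + 1)) (by ring)),
    hS.tp_smul_vec_eq_zero_iff, hS.tm_smul_vec_eq_zero_iff]

end IsSimpleGr

/-- Since the homogeneous components of a simple graded module are finite-dimensional, an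
isomorphism `S ≅ S*` of graded modules is the same thing as a `ℂ`-bilinear pairing
`β : S × S → ℂ` which vanishes on pairs of components of distinct degrees, is perfect on
each component, and satisfies `β(m, a•m') = β(ι(a)•m, m')` for the anti-involution `ι`. -/
theorem stmt7_general {R : Type} [CommRing R] [Algebra ℂ R] (hfg : Algebra.FiniteType ℂ R)
    {σ : R ≃ₐ[ℂ] R} {v : R} (G : GWA R σ v)
    (iot : G.A →+* (G.A)ᵐᵒᵖ)
    (hR : ∀ r : R, iot (G.emb r) = MulOpposite.op (G.emb r))
    (htp : iot G.tp = MulOpposite.op G.tm)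
    (htm : iot G.tm = MulOpposite.op G.tp)
    (S : GradedMod G) [Module ℂ S.M]
    (hsc : ∀ (c : ℂ) (m : S.M), c • m = algebraMap ℂ G.A c • m)
    (hS : IsSimpleGr S) :
    ∃ β : S.M →ₗ[ℂ] S.M →ₗ[ℂ] ℂ,
      (∀ i j : ℤ, i ≠ j → ∀ m ∈ S.deg i, ∀ m' ∈ S.deg j, β m m' = 0) ∧
      (∀ (a : G.A) (m m' : S.M), β m (a • m') = β ((iot a).unop • m) m') ∧
      (∀ n : ℤ, ∀ m ∈ S.deg n, m ≠ 0 → ∃ m' ∈ S.deg n, β m m' ≠ 0) ∧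
      (∀ n : ℤ, ∀ m' ∈ S.deg n, m' ≠ 0 → ∃ m ∈ S.deg n, β m m' ≠ 0) := by
  have : IsScalarTower ℂ G.A S.M :=
    ⟨fun c a m => by rw [Algebra.smul_def, mul_smul, ← hsc]⟩
  obtain ⟨b⟩ := hS.nonempty_lineBasis
  obtain ⟨x, hx0, hx⟩ := exists_forall_ne_zero_mul_eq _ _ (hS.coord_tp_smul_vec_eq_zero_iff b)
  refine ⟨b.pairingₗ x, fun i j hij m hm m' hm' => b.pairing_eq_zero_of_ne x hij hm hm',
    b.pairing_smul_right_eq x iot hR htp htm hx, fun n m hm hm0 => ⟨b.vec n, b.vec_mem n, ?_⟩,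
    fun n m' hm' hm0 => ⟨b.vec n, b.vec_mem n, ?_⟩⟩
  · exact b.pairing_vec_ne_zero x hx0 hm hm0
  · rw [b.pairingₗ_apply, b.pairing_comm]
    exact b.pairing_vec_ne_zero x hx0 hm' hm0

/-- Every simple graded module is isomorphic to its graded dual.
Since the homogeneous components of a simple graded module are finite-dimensional, an
isomorphism `S ≅ S*` of graded modules is the same thing as a `ℂ`-bilinear pairing
`β : S × S → ℂ` which vanishes on pairs of components of distinct degrees, is perfect on
each component, and satisfies `β(m, a•m') = β(ι(a)•m, m')` for the anti-involution `ι`. -/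
theorem stmt7 {R : Type} [CommRing R] [Algebra ℂ R] (hfg : Algebra.FiniteType ℂ R)
    {σ : R ≃ₐ[ℂ] R} {v : R} (G : GWA R σ v)
    (iot : G.A →+* (G.A)ᵐᵒᵖ) (hbij : Function.Bijective iot)
    (hR : ∀ r : R, iot (G.emb r) = MulOpposite.op (G.emb r))
    (htp : iot G.tp = MulOpposite.op G.tm)
    (htm : iot G.tm = MulOpposite.op G.tp)
    (S : GradedMod G) [Module ℂ S.M]
    (hsc : ∀ (c : ℂ) (m : S.M), c • m = algebraMap ℂ G.A c • m)
    (hS : IsSimpleGr S) :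
    ∃ β : S.M →ₗ[ℂ] S.M →ₗ[ℂ] ℂ,
      (∀ i j : ℤ, i ≠ j → ∀ m ∈ S.deg i, ∀ m' ∈ S.deg j, β m m' = 0) ∧
      (∀ (a : G.A) (m m' : S.M), β m (a • m') = β ((iot a).unop • m) m') ∧
      (∀ n : ℤ, ∀ m ∈ S.deg n, m ≠ 0 → ∃ m' ∈ S.deg n, β m m' ≠ 0) ∧
      (∀ n : ℤ, ∀ m' ∈ S.deg n, m' ≠ 0 → ∃ m ∈ S.deg n, β m m' ≠ 0) :=
  stmt7_general hfg G iot hR htp htm S hsc hS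
end
end
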